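/- (Lemma 3.8(ii), parabolic parameter in the anti-ferromagnetic regime) Let d ≥ 2 be an integer and let b ∈ (1, (d+1)/(d−1)). Then there exists a unique θ ∈ (0,π) such that for ξ = e^{iθ} the map f_{ξ,b} has a fixed point R ∈ ∂𝔻 with |f'_{ξ,b}(R)| = 1; moreover, for this θ and ξ = e^{iθ}, any fixed point R ∈ ∂𝔻 of f_{ξ,b} with |f'_{ξ,b}(R)| = 1 satisfies f'_{ξ,b}(R) = −1 and is a solution of the quadratic equation R² + ((d(1−b²)+(1+b²))/b)·R + 1 = 0. The same θ works for ξ = e^{−iθ}, with the fixed point replaced by its complex conjugate. -/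

import Mathlib

/-!
At a fixed point `R` of `f = f_{ξ,b}` on the unit circle, `f'(R) = d (1 - b²) / |bR + 1|²` is a
negative real number, so `|f'(R)| = 1` forces `f'(R) = -1` and
`Re R = c := (d (b² - 1) - (b² + 1)) / (2b)`; this `c` lies in `(-1, 1)` when
`b ∈ (1, (d+1)/(d-1))`. Hence `R = e^{±iφ}` with `φ = arccos c`, and the fixed point equation
determines `ξ = R ((bR + 1)/(R + b))^d`. For `R = e^{iφ}` one finds `(bR + 1)/(R + b) = e^{iδ}`
with `δ ∈ (0, π/2)` and `d sin δ = sin φ`; strict concavity of `sin` on `[0, π]` then gives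
`φ + dδ < π`, so `θ = φ + dδ ∈ (0, π)`, while `R = e^{-iφ}` yields the conjugate parameter
`e^{-iθ}`.
-/

/-- The rational map `f_{ξ,b}(R) = ξ·((R+b)/(bR+1))^d` associated to the Ising model. -/
noncomputable def fIsing (d : ℕ) (ξ b R : ℂ) : ℂ := ξ * ((R + b) / (b * R + 1)) ^ d

section

open Real

lemma sin_lt_mul_sin_div {d x : ℝ} (hd : 1 < d) (hx₀ : 0 < x) (hx : x ≤ π) :
    sin x < d * sin (x / d) := by
  have hconc := strictConcaveOn_sin_Icc.2 ⟨hx₀.le, hx⟩ ⟨le_rfl, pi_pos.le⟩ hx₀.ne'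
    (inv_pos.2 (by linarith : 0 < d)) (sub_pos.2 (inv_lt_one_of_one_lt₀ hd)) (add_sub_cancel _ _)
  simp only [smul_eq_mul, mul_zero, add_zero, sin_zero] at hconc
  rw [← div_eq_inv_mul, ← div_eq_inv_mul, div_lt_iff₀ (by linarith)] at hconc
  linarith

lemma add_mul_lt_pi_of_sin_eq_mul_sin {d φ δ : ℝ} (hd : 1 < d) (hφ₀ : 0 < φ) (hφ : φ < π)
    (hδ₀ : 0 < δ) (hδ : δ < π / 2) (h : sin φ = d * sin δ) : φ + d * δ < π := by
  by_contra! hle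
  have hx : (π - φ) / d ≤ δ := by rw [div_le_iff₀ (by linarith)]; linarith
  have hx₀ : 0 < (π - φ) / d := div_pos (by linarith) (by linarith)
  have hmono : sin ((π - φ) / d) ≤ sin δ :=
    strictMonoOn_sin.monotoneOn ⟨by linarith, by linarith⟩ ⟨by linarith, hδ.le⟩ hx
  have hconc := sin_lt_mul_sin_div hd (sub_pos.2 hφ) (by linarith)
  rw [sin_pi_sub] at hconc
  nlinarith

end

open Complex Function Set
open scoped ComplexConjugate Real

lemma eq_of_exp_ofReal_mul_I_eq {θ θ' : ℝ} (hθ : θ ∈ Ioc (-π) π) (hθ' : θ' ∈ Ioc (-π) π)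
    (h : exp (θ * I) = exp (θ' * I)) : θ = θ' := by
  have := congrArg arg h
  rwa [arg_exp_mul_I, arg_exp_mul_I,
    (toIocMod_eq_self _).2 (by simpa [two_mul, ← add_assoc] using hθ),
    (toIocMod_eq_self _).2 (by simpa [two_mul, ← add_assoc] using hθ')] at this

/-- The real part `c` shared by all fixed points on the unit circle with multiplier `-1`. -/
noncomputable def parabolicRe (d : ℕ) (b : ℝ) : ℝ := (d * (b ^ 2 - 1) - (b ^ 2 + 1)) / (2 * b)

section

variable {d : ℕ} {b : ℝ} {ξ R : ℂ}

lemma two_mul_parabolicRe (hb : 0 < b) :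
    2 * b * parabolicRe d b = d * (b ^ 2 - 1) - (b ^ 2 + 1) := by
  rw [parabolicRe]; field_simp

lemma norm_ofReal_mul_add_one (hR : ‖R‖ = 1) : ‖(b : ℂ) * R + 1‖ = ‖R + b‖ := by
  have hRR : R * conj R = 1 := by rw [mul_conj', hR]; norm_num
  have : (b : ℂ) * R + 1 = R * conj (R + b) := by
    rw [map_add, conj_ofReal, mul_add, hRR]; ring
  rw [this, norm_mul, hR, one_mul, norm_conj]

lemma add_ofReal_ne_zero (hb : 1 < b) (hR : ‖R‖ = 1) : R + b ≠ 0 := by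
  intro h
  have := congrArg norm (eq_neg_of_add_eq_zero_left h)
  rw [hR, norm_neg, norm_real, Real.norm_of_nonneg (by linarith)] at this
  linarith

lemma ofReal_mul_add_one_ne_zero (hb : 1 < b) (hR : ‖R‖ = 1) : (b : ℂ) * R + 1 ≠ 0 := by
  rw [← norm_ne_zero_iff, norm_ofReal_mul_add_one hR, norm_ne_zero_iff]
  exact add_ofReal_ne_zero hb hR

lemma add_mul_ofReal_mul_add_one (hR : ‖R‖ = 1) :
    (R + b) * (b * R + 1) = R * (b ^ 2 + 1 + 2 * b * R.re : ℝ) := by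
  have hRR : R * conj R = 1 := by rw [mul_conj', hR]; norm_num
  have hre : R + conj R = (2 * R.re : ℝ) := add_conj R
  push_cast at hre ⊢
  linear_combination (b : ℂ) * R * hre - (b : ℂ) * hRR

lemma sq_add_one_add_two_mul_re_pos (hb : 1 < b) (hR : ‖R‖ = 1) : 0 < b ^ 2 + 1 + 2 * b * R.re := by
  have : -1 ≤ R.re := by linarith [neg_abs_le R.re, abs_re_le_norm R]
  nlinarith

lemma hasDerivAt_fIsing {b z : ℂ} (h : b * z + 1 ≠ 0) :
    HasDerivAt (fIsing d ξ b)
      (ξ * (d * ((z + b) / (b * z + 1)) ^ (d - 1) * ((1 - b ^ 2) / (b * z + 1) ^ 2))) z := by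
  have hquot : HasDerivAt (fun R ↦ (R + b) / (b * R + 1)) ((1 - b ^ 2) / (b * z + 1) ^ 2) z := by
    refine (((hasDerivAt_id z).add_const b).div
      (((hasDerivAt_id z).const_mul b).add_const 1) h).congr_deriv ?_
    simp only [id]
    ring
  exact (hquot.pow d).const_mul ξ

lemma isFixedPt_fIsing_iff (hb : 1 < b) (hR : ‖R‖ = 1) :
    IsFixedPt (fIsing d ξ b) R ↔ ξ = R * ((b * R + 1) / (R + b)) ^ d := by
  have hX : ((R + b) / (b * R + 1)) ^ d ≠ 0 :=
    pow_ne_zero _ (div_ne_zero (add_ofReal_ne_zero hb hR) (ofReal_mul_add_one_ne_zero hb hR))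
  have hinv : ((b * R + 1) / (R + b)) ^ d = (((R + b) / (b * R + 1)) ^ d)⁻¹ := by
    rw [← inv_pow, inv_div]
  rw [IsFixedPt, fIsing, hinv, ← div_eq_mul_inv, eq_div_iff hX]

lemma IsFixedPt.fIsing_conj (h : IsFixedPt (fIsing d ξ b) R) :
    IsFixedPt (fIsing d (conj ξ) b) (conj R) := by
  simpa [IsFixedPt, fIsing] using congrArg conj h

lemma deriv_fIsing_of_isFixedPt (hb : 1 < b) (hR : ‖R‖ = 1) (hfix : IsFixedPt (fIsing d ξ b) R) :
    deriv (fIsing d ξ b) R = (d * (1 - b ^ 2) / (b ^ 2 + 1 + 2 * b * R.re) : ℝ) := by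
  have hbR := ofReal_mul_add_one_ne_zero hb hR
  have hR0 : R ≠ 0 := norm_ne_zero_iff.1 (hR ▸ one_ne_zero)
  have hprod := add_mul_ofReal_mul_add_one (b := b) hR
  have hD := ofReal_ne_zero.2 (sq_add_one_add_two_mul_re_pos hb hR).ne'
  rw [(hasDerivAt_fIsing hbR).deriv]
  rcases d with _ | n
  · simp
  · rw [IsFixedPt, fIsing, pow_succ] at hfix
    set X := (R + b) / (b * R + 1) with hX
    push_cast at hD hprod ⊢
    have key : ξ * X ^ n * (b ^ 2 + 1 + 2 * b * R.re) / (b * R + 1) ^ 2 = 1 := by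
      apply mul_left_cancel₀ hR0
      calc R * (ξ * X ^ n * (b ^ 2 + 1 + 2 * b * R.re) / (b * R + 1) ^ 2)
          = ξ * X ^ n * ((R + b) * (b * R + 1)) / (b * R + 1) ^ 2 := by rw [hprod]; ring
        _ = ξ * (X ^ n * X) := by rw [hX]; field_simp
        _ = R * 1 := by rw [hfix, mul_one]
    rw [eq_div_iff hD]
    linear_combination (n + 1) * (1 - (b : ℂ) ^ 2) * key

lemma norm_deriv_fIsing_eq_one_iff (hb : 1 < b) (hR : ‖R‖ = 1)
    (hfix : IsFixedPt (fIsing d ξ b) R) :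
    ‖deriv (fIsing d ξ b) R‖ = 1 ↔ deriv (fIsing d ξ b) R = -1 := by
  have hnonpos : d * (1 - b ^ 2) / (b ^ 2 + 1 + 2 * b * R.re) ≤ 0 :=
    div_nonpos_of_nonpos_of_nonneg (mul_nonpos_of_nonneg_of_nonpos d.cast_nonneg (by nlinarith))
      (sq_add_one_add_two_mul_re_pos hb hR).le
  rw [deriv_fIsing_of_isFixedPt hb hR hfix, norm_real, Real.norm_of_nonpos hnonpos,
    ← ofReal_one, ← ofReal_neg, ofReal_inj, neg_eq_iff_eq_neg]

lemma deriv_fIsing_eq_neg_one_iff (hb : 1 < b) (hR : ‖R‖ = 1)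
    (hfix : IsFixedPt (fIsing d ξ b) R) :
    deriv (fIsing d ξ b) R = -1 ↔ R.re = parabolicRe d b := by
  rw [deriv_fIsing_of_isFixedPt hb hR hfix, ← ofReal_one, ← ofReal_neg, ofReal_inj,
    div_eq_iff (sq_add_one_add_two_mul_re_pos hb hR).ne', parabolicRe, eq_div_iff (by positivity)]
  constructor <;> intro h <;> linarith

lemma neg_one_lt_parabolicRe (hd : 1 ≤ d) (hb : 1 < b) : -1 < parabolicRe d b := by
  have hd' : (1 : ℝ) ≤ d := by exact_mod_cast hd
  rw [parabolicRe, lt_div_iff₀ (by positivity)]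
  nlinarith [mul_pos (sub_pos.2 hb) (show 0 < d * (b + 1) - (b - 1) by nlinarith)]

lemma parabolicRe_lt_one (hb : 1 < b) (hbd : b * (d - 1) < d + 1) : parabolicRe d b < 1 := by
  rw [parabolicRe, div_lt_iff₀ (by positivity)]
  nlinarith

lemma sq_add_mul_add_one_eq_zero_of_re_eq_parabolicRe (hR : ‖R‖ = 1)
    (hre : R.re = parabolicRe d b) :
    R ^ 2 + ((d * (1 - b ^ 2) + (1 + b ^ 2)) / b) * R + 1 = 0 := by
  have hRR : R * conj R = 1 := by rw [mul_conj', hR]; norm_num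
  have hsum : R + conj R = (2 * R.re : ℝ) := add_conj R
  have hcoef : ((d * (1 - b ^ 2) + (1 + b ^ 2)) / b : ℂ) = -(2 * R.re : ℝ) := by
    rw [hre, parabolicRe]
    push_cast
    field_simp
    ring
  rw [hcoef]
  linear_combination R * hsum - hRR

lemma eq_or_eq_conj_of_norm_eq_of_re_eq {z w : ℂ} (hn : ‖z‖ = ‖w‖) (hre : z.re = w.re) :
    z = w ∨ z = conj w := by
  have him : z.im ^ 2 = w.im ^ 2 := by
    have := congrArg (· ^ 2) hn
    simp only [Complex.sq_norm, normSq_apply, hre] at this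
    linear_combination this
  rcases sq_eq_sq_iff_eq_or_eq_neg.1 him with h | h
  · exact .inl (Complex.ext hre h)
  · exact .inr (Complex.ext (by simpa using hre) (by simpa using h))

lemma mul_add_one_div_add_eq (hd : 1 ≤ d) (hb : 1 < b) (hR : ‖R‖ = 1)
    (hre : R.re = parabolicRe d b) :
    (b * R + 1) / (R + b) =
      (((b ^ 2 + 1) * R.re + 2 * b) / (d * (b ^ 2 - 1)) : ℝ) + (R.im / d : ℝ) * I := by
  have hd' : (1 : ℝ) ≤ d := by exact_mod_cast hd
  have hnorm : R.re ^ 2 + R.im ^ 2 = 1 := by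
    have h := Complex.sq_norm R
    rw [hR, normSq_apply] at h
    linear_combination -h
  have hb2 : b ^ 2 - 1 ≠ 0 := by nlinarith
  have h2b : 2 * b * R.re = d * (b ^ 2 - 1) - (b ^ 2 + 1) := hre ▸ two_mul_parabolicRe (by linarith)
  rw [div_eq_iff (add_ofReal_ne_zero hb hR)]
  apply Complex.ext <;>
    simp only [mul_re, mul_im, add_re, add_im, ofReal_re, ofReal_im, I_re, I_im, one_re, one_im] <;>
    field_simp
  · linear_combination (b ^ 2 - 1) * hnorm + (-(b * R.re) - 1) * h2b
  · linear_combination (-(b * R.im)) * h2b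

lemma exists_mul_add_one_div_add_eq_exp (hd : 1 ≤ d) (hb : 1 < b) (hR : ‖R‖ = 1)
    (hre : R.re = parabolicRe d b) (him : 0 < R.im) :
    ∃ δ, 0 < δ ∧ δ < π / 2 ∧ R.im = d * Real.sin δ ∧ (b * R + 1) / (R + b) = exp (δ * I) := by
  have hd' : (1 : ℝ) ≤ d := by exact_mod_cast hd
  set w := (b * R + 1) / (R + b)
  have hw : w = _ := mul_add_one_div_add_eq hd hb hR hre
  have hw_norm : ‖w‖ = 1 := by
    rw [norm_div, norm_ofReal_mul_add_one hR,
      div_self (norm_ne_zero_iff.2 (add_ofReal_ne_zero hb hR))]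
  have hw_re : 0 < w.re := by
    have h2c := two_mul_parabolicRe (d := d) (by linarith : 0 < b)
    have hnum : 0 < (b ^ 2 + 1) * R.re + 2 * b := by
      rw [hre]
      nlinarith [mul_pos (by nlinarith : 0 < b ^ 2 - 1)
        (by nlinarith : 0 < d * (b ^ 2 + 1) - (b ^ 2 - 1))]
    rw [hw, add_re, ofReal_re, re_ofReal_mul, I_re, mul_zero, add_zero]
    exact div_pos hnum (mul_pos (by linarith) (by nlinarith))
  have hw_im : w.im = R.im / d := by
    rw [hw, add_im, ofReal_im, im_ofReal_mul, I_im, mul_one, zero_add]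
  refine ⟨arg w, lt_of_le_of_ne (arg_nonneg_iff.2 (hw_im ▸ by positivity)) fun h ↦ ?_,
    (abs_lt.1 (abs_arg_lt_pi_div_two_iff.2 (.inl hw_re))).2, ?_, ?_⟩
  · have := sin_arg w
    rw [← h, Real.sin_zero, hw_norm, div_one, hw_im] at this
    exact (div_pos him (by linarith)).ne' this.symm
  · rw [sin_arg, hw_norm, div_one, hw_im]; field_simp
  · simpa [hw_norm] using (norm_mul_exp_arg_mul_I w).symm

lemma exists_exp_mul_I_eq_of_re_eq_parabolicRe (hd : 2 ≤ d) (hb : 1 < b)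
    (hbd : b * (d - 1) < d + 1) :
    ∃ θ ∈ Ioo 0 π, ∃ R : ℂ, ‖R‖ = 1 ∧ R.re = parabolicRe d b ∧
      exp (θ * I) = R * ((b * R + 1) / (R + b)) ^ d := by
  have hd' : (2 : ℝ) ≤ d := by exact_mod_cast hd
  have hc₁ := neg_one_lt_parabolicRe (by omega : 1 ≤ d) hb
  have hc₂ := parabolicRe_lt_one hb hbd
  set φ := Real.arccos (parabolicRe d b)
  have hφ₀ : 0 < φ := Real.arccos_pos.2 hc₂
  have hφ : φ < π := Real.arccos_lt_pi.2 hc₁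
  set R := exp (φ * I)
  have hR : ‖R‖ = 1 := norm_exp_ofReal_mul_I φ
  have hre : R.re = parabolicRe d b := by rw [exp_ofReal_mul_I_re, Real.cos_arccos hc₁.le hc₂.le]
  have him : R.im = Real.sin φ := exp_ofReal_mul_I_im φ
  obtain ⟨δ, hδ₀, hδ, hsin, hw⟩ := exists_mul_add_one_div_add_eq_exp (by omega) hb hR hre
    (him ▸ Real.sin_pos_of_pos_of_lt_pi hφ₀ hφ)
  refine ⟨φ + d * δ, ⟨by positivity,
    add_mul_lt_pi_of_sin_eq_mul_sin (by linarith) hφ₀ hφ hδ₀ hδ (him ▸ hsin)⟩, R, hR, hre, ?_⟩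
  rw [hw, ← exp_nat_mul, ← exp_add]
  congr 1
  push_cast
  ring

end

/-- Lemma 3.8(ii): for `b ∈ (1, (d+1)/(d-1))` there is a unique `θ ∈ (0,π)` for which
`f_{e^{iθ},b}` has a fixed point on the unit circle whose derivative has modulus 1;
any such fixed point has derivative exactly -1 and satisfies the stated quadratic
equation, and the same `θ` works for `e^{-iθ}` with the conjugate fixed point. -/
theorem fIsing_parabolic_parameter_antiferro (d : ℕ) (hd : 2 ≤ d) (b : ℝ)
    (hb₁ : 1 < b) (hb₂ : b < ((d : ℝ) + 1) / ((d : ℝ) - 1)) :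
    ∃ θ : ℝ, θ ∈ Set.Ioo 0 Real.pi ∧
      (∃ R : ℂ, ‖R‖ = 1 ∧
        fIsing d (Complex.exp (θ * Complex.I)) (b : ℂ) R = R ∧
        ‖deriv (fIsing d (Complex.exp (θ * Complex.I)) (b : ℂ)) R‖ = 1) ∧
      (∀ θ' ∈ Set.Ioo 0 Real.pi,
        (∃ R : ℂ, ‖R‖ = 1 ∧
          fIsing d (Complex.exp (θ' * Complex.I)) (b : ℂ) R = R ∧
          ‖deriv (fIsing d (Complex.exp (θ' * Complex.I)) (b : ℂ)) R‖ = 1) →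
        θ' = θ) ∧
      (∀ R : ℂ, ‖R‖ = 1 →
        fIsing d (Complex.exp (θ * Complex.I)) (b : ℂ) R = R →
        ‖deriv (fIsing d (Complex.exp (θ * Complex.I)) (b : ℂ)) R‖ = 1 →
          deriv (fIsing d (Complex.exp (θ * Complex.I)) (b : ℂ)) R = -1 ∧
          R ^ 2 + (((d : ℂ) * (1 - (b : ℂ) ^ 2) + (1 + (b : ℂ) ^ 2)) / (b : ℂ)) * R + 1 = 0 ∧
          fIsing d (Complex.exp (-(θ * Complex.I))) (b : ℂ) (starRingEnd ℂ R) =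
            starRingEnd ℂ R ∧
          ‖deriv (fIsing d (Complex.exp (-(θ * Complex.I))) (b : ℂ))
            (starRingEnd ℂ R)‖ = 1) := by
  have hbd : b * (d - 1) < d + 1 := by
    have hd' : (2 : ℝ) ≤ d := by exact_mod_cast hd
    rwa [lt_div_iff₀ (by linarith)] at hb₂
  have hparabolic {ξ R : ℂ} (hR : ‖R‖ = 1) (hfix : IsFixedPt (fIsing d ξ b) R) :
      ‖deriv (fIsing d ξ b) R‖ = 1 ↔ R.re = parabolicRe d b :=
    (norm_deriv_fIsing_eq_one_iff hb₁ hR hfix).trans (deriv_fIsing_eq_neg_one_iff hb₁ hR hfix)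
  obtain ⟨θ, hθ, R₀, hR₀, hre₀, hξ₀⟩ := exists_exp_mul_I_eq_of_re_eq_parabolicRe hd hb₁ hbd
  have hfix₀ : IsFixedPt (fIsing d (exp (θ * I)) b) R₀ := (isFixedPt_fIsing_iff hb₁ hR₀).2 hξ₀
  refine ⟨θ, hθ, ⟨R₀, hR₀, hfix₀, (hparabolic hR₀ hfix₀).2 hre₀⟩, ?_, ?_⟩
  · rintro θ' hθ' ⟨R, hR, hfix, hder⟩
    rcases eq_or_eq_conj_of_norm_eq_of_re_eq (hR.trans hR₀.symm)
      (((hparabolic hR hfix).1 hder).trans hre₀.symm) with rfl | rfl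
    · refine eq_of_exp_ofReal_mul_I_eq ⟨by linarith [hθ'.1, Real.pi_pos], hθ'.2.le⟩
        ⟨by linarith [hθ.1, Real.pi_pos], hθ.2.le⟩ ?_
      exact ((isFixedPt_fIsing_iff hb₁ hR).1 hfix).trans hξ₀.symm
    · -- `conj R₀` is fixed only by the conjugate parameter, which lies in the lower half-plane
      have hfix' := IsFixedPt.fIsing_conj hfix
      rw [conj_conj] at hfix'
      have h := congrArg im (((isFixedPt_fIsing_iff hb₁ hR₀).1 hfix').trans hξ₀.symm)
      rw [conj_im, exp_ofReal_mul_I_im, exp_ofReal_mul_I_im] at h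
      linarith [Real.sin_pos_of_pos_of_lt_pi hθ.1 hθ.2, Real.sin_pos_of_pos_of_lt_pi hθ'.1 hθ'.2]
  · intro R hR hfix hder
    have hre := (hparabolic hR hfix).1 hder
    have hfix' := IsFixedPt.fIsing_conj hfix
    rw [← exp_conj, map_mul, conj_ofReal, conj_I, mul_neg] at hfix'
    exact ⟨(norm_deriv_fIsing_eq_one_iff hb₁ hR hfix).1 hder,
      sq_add_mul_add_one_eq_zero_of_re_eq_parabolicRe hR hre, hfix',
      (hparabolic (by rwa [norm_conj]) hfix').2 (by rwa [conj_re])⟩
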